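/- Let ρ > 0 and let x ∈ ℝⁿ_↓ not be a scalar multiple of the all-ones vector e. If xₙ > α̲/(ρ‖x‖₁), then the unit vector w* := w̲/‖w̲‖₂, where w̲ = x − (α̲/(ρ‖x‖₁))e, is a global minimizer of ½wᵀA_{ρ,x}w over S^{n-1}_+, and prox_{(1/ρ)h₂}(x) = {⟨x, w*⟩ w*}. -/

import Mathlib

/-- The ℓ₁ norm on `ℝⁿ`. -/
noncomputable def l1norm {n : ℕ} (x : Fin n → ℝ) : ℝ := ∑ i, |x i|

/-- The ℓ₂ norm on `ℝⁿ`. -/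
noncomputable def l2norm {n : ℕ} (x : Fin n → ℝ) : ℝ := Real.sqrt (∑ i, (x i) ^ 2)

-- `h₂(x) = (‖x‖₁/‖x‖₂)²` for `x ≠ 0`, and `h₂(0) = 0`.
open Classical in
noncomputable def h2 {n : ℕ} (x : Fin n → ℝ) : ℝ :=
  if x = 0 then 0 else (l1norm x / l2norm x) ^ 2

/-- `prox_{(1/ρ) f}(z)`: the set of global minimizers of `(ρ/2)‖u - z‖₂² + f(u)`. -/
noncomputable def proxSet {n : ℕ} (ρ : ℝ) (f : (Fin n → ℝ) → ℝ) (z : Fin n → ℝ) :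
    Set (Fin n → ℝ) :=
  {u | ∀ v : Fin n → ℝ,
    ρ / 2 * (∑ i, (u i - z i) ^ 2) + f u ≤ ρ / 2 * (∑ i, (v i - z i) ^ 2) + f v}

/-!
Put `t = α̲ / (ρ‖x‖₁)` and `v = x - t e`. That `α̲` is a root of
`α² - (ρ‖x‖₂² + 2n) α + 2ρ‖x‖₁² = 0` says exactly `2 Σ vᵢ = ρ t ⟨x, v⟩`, and `ρ t² < 2` because
`α̲` is the smaller of two distinct positive roots with product `2ρ‖x‖₁²`. With `w* = v / ‖v‖`, these two relations turn
`wᵀAw - w*ᵀAw*` into `ρ ((t Σ wᵢ + ‖v‖)² - ⟨x, w⟩²) + (2 - ρ t²) (Σ wᵢ - Σ w*ᵢ)²` for unit `w`, and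
Cauchy–Schwarz, `⟨x, w⟩ - t Σ wᵢ = ⟨v, w⟩ ≤ ‖v‖`, makes both terms nonnegative once `⟨x, w⟩ ≥ 0`;
equality in Cauchy–Schwarz forces `w = w*`.

For `u ≠ 0` with `r = ‖u‖₂` and `w = |u| / r ∈ S^{n-1}_+`, the prox objective equals
`(ρ/2)‖x‖² + wᵀAw / 2 + (ρ/2)(r - ⟨x, w⟩)² + ρ ⟨x, |u| - u⟩`, so it is minimised exactly by
`w = w*`, `r = ⟨x, w*⟩`, `u ≥ 0`; its value there is below the value `(ρ/2)‖x‖²` at `u = 0`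
because `w*ᵀAw* < 0`.
-/

open Finset

/-- `quadA ρ x w = wᵀ A_{ρ,x} w`. -/
def quadA {ι : Type*} [Fintype ι] (ρ : ℝ) (x w : ι → ℝ) : ℝ :=
  2 * (∑ i, w i) ^ 2 - ρ * (∑ i, x i * w i) ^ 2

/-- `S^{n-1}_+` -/
def nonnegUnitSphere (ι : Type*) [Fintype ι] : Set (ι → ℝ) :=
  {w | ∑ i, w i ^ 2 = 1 ∧ ∀ i, 0 ≤ w i}

section Fintype

variable {ι : Type*} [Fintype ι]

theorem sum_sum_mul_mul_eq_quadA (ρ : ℝ) (x w : ι → ℝ) :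
    ∑ i, ∑ j, (2 - ρ * x i * x j) * w i * w j = quadA ρ x w := by
  rw [quadA, sq, sq, sum_mul_sum, sum_mul_sum, mul_sum, mul_sum, ← sum_sub_distrib]
  refine sum_congr rfl fun i _ => ?_
  rw [mul_sum, mul_sum, ← sum_sub_distrib]
  exact sum_congr rfl fun j _ => by ring

theorem sum_sum_sub_sq (x : ι → ℝ) :
    ∑ i, ∑ j, (x i - x j) ^ 2 = 2 * (Fintype.card ι * ∑ i, x i ^ 2 - (∑ i, x i) ^ 2) := by
  simp only [sub_sq, sum_add_distrib, sum_sub_distrib, sum_const, card_univ, nsmul_eq_mul,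
    ← mul_sum, ← sum_mul]
  ring

theorem sq_sum_lt_card_mul_sum_sq {x : ι → ℝ} {i j : ι} (h : x i ≠ x j) :
    (∑ i, x i) ^ 2 < Fintype.card ι * ∑ i, x i ^ 2 := by
  have hij : 0 < (x i - x j) ^ 2 := by have := sub_ne_zero.2 h; positivity
  have : 0 < ∑ i, ∑ j, (x i - x j) ^ 2 :=
    sum_pos' (fun _ _ => sum_nonneg fun _ _ => sq_nonneg _)
      ⟨i, mem_univ _, sum_pos' (fun _ _ => sq_nonneg _) ⟨j, mem_univ _, hij⟩⟩
  linarith [sum_sum_sub_sq x]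

end Fintype

theorem lowerRoot_spec {K c α : ℝ} (hK : 0 < K) (hc : 0 < c) (hcK : c < K ^ 2)
    (hα : α = K - √(K ^ 2 - c)) : α ^ 2 - 2 * K * α + c = 0 ∧ 0 < α ∧ α ^ 2 < c := by
  have hΔ : 0 < K ^ 2 - c := by linarith
  have hlt : √(K ^ 2 - c) < K := (Real.sqrt_lt' hK).2 (by linarith)
  have hroot : α ^ 2 - 2 * K * α + c = 0 := by
    rw [hα]; linear_combination Real.sq_sqrt hΔ.le
  refine ⟨hroot, by linarith, ?_⟩
  nlinarith [mul_pos (show 0 < α by linarith) (Real.sqrt_pos.2 hΔ)]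

theorem shift_spec_of_lowerRoot {ρ S₁ S₂ m α : ℝ} (hρ : 0 < ρ) (hS₁ : 0 < S₁)
    (hm : 0 < m) (hCS : S₁ ^ 2 < m * S₂)
    (hα : α = (ρ / 2 * S₂ + m) - √((ρ / 2 * S₂ + m) ^ 2 - 2 * ρ * S₁ ^ 2)) :
    0 < α / (ρ * S₁) ∧ ρ * (α / (ρ * S₁)) ^ 2 < 2 ∧
      ρ * S₁ * (α / (ρ * S₁)) ^ 2 - (ρ * S₂ + 2 * m) * (α / (ρ * S₁)) + 2 * S₁ = 0 := by
  have hS₂ : 0 < S₂ := pos_of_mul_pos_right ((sq_nonneg S₁).trans_lt hCS) hm.le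
  have hK : 0 < ρ / 2 * S₂ + m := by positivity
  have hcK : 2 * ρ * S₁ ^ 2 < (ρ / 2 * S₂ + m) ^ 2 := by
    nlinarith [sq_nonneg (ρ / 2 * S₂ - m), mul_lt_mul_of_pos_left hCS hρ]
  obtain ⟨hroot, hα0, hαc⟩ := lowerRoot_spec hK (by positivity) hcK hα
  have hρS : 0 < ρ * S₁ := mul_pos hρ hS₁
  refine ⟨div_pos hα0 hρS, ?_, ?_⟩
  · rw [div_pow, mul_div_assoc', div_lt_iff₀ (by positivity)]
    nlinarith
  · field_simp
    linear_combination hroot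

section L2norm

variable {n : ℕ}

theorem l2norm_eq_norm (v : Fin n → ℝ) :
    l2norm v = ‖(WithLp.toLp 2 v : EuclideanSpace ℝ (Fin n))‖ := by
  simp [l2norm, EuclideanSpace.norm_eq]

theorem sq_l2norm (v : Fin n → ℝ) : l2norm v ^ 2 = ∑ i, v i ^ 2 :=
  Real.sq_sqrt (sum_nonneg fun _ _ => sq_nonneg _)

theorem l2norm_pos {v : Fin n → ℝ} (hv : v ≠ 0) : 0 < l2norm v := by
  rw [l2norm_eq_norm]
  exact norm_pos_iff.2 (by simpa using hv)

theorem l2norm_smul (c : ℝ) (v : Fin n → ℝ) : l2norm (c • v) = |c| * l2norm v := by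
  simp [l2norm_eq_norm, norm_smul]

theorem l2norm_abs (v : Fin n → ℝ) : l2norm |v| = l2norm v := by
  simp [l2norm]

theorem sum_mul_le_l2norm_mul_l2norm (v w : Fin n → ℝ) :
    ∑ i, v i * w i ≤ l2norm v * l2norm w :=
  Real.sum_mul_le_sqrt_mul_sqrt _ _ _

theorem smul_eq_smul_of_sum_mul_eq {v w : Fin n → ℝ}
    (h : ∑ i, v i * w i = l2norm v * l2norm w) : l2norm w • v = l2norm v • w := by
  simp only [l2norm_eq_norm] at h ⊢
  rw [← (WithLp.toLp_injective 2).eq_iff, WithLp.toLp_smul, WithLp.toLp_smul]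
  refine inner_eq_norm_mul_iff_real.1 ?_
  simpa [PiLp.inner_apply, mul_comm] using h

theorem inv_l2norm_smul_mem_nonnegUnitSphere {v : Fin n → ℝ} (hv0 : v ≠ 0) (hv : ∀ i, 0 ≤ v i) :
    (l2norm v)⁻¹ • v ∈ nonnegUnitSphere (Fin n) := by
  have hN := l2norm_pos hv0
  refine ⟨?_, fun i => mul_nonneg (inv_nonneg.2 hN.le) (hv i)⟩
  simp only [Pi.smul_apply, smul_eq_mul, mul_pow, ← mul_sum, ← sq_l2norm]
  field_simp

theorem inv_l2norm_smul_abs_mem_nonnegUnitSphere {u : Fin n → ℝ} (hu : u ≠ 0) :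
    (l2norm u)⁻¹ • |u| ∈ nonnegUnitSphere (Fin n) := by
  rw [← l2norm_abs]
  exact inv_l2norm_smul_mem_nonnegUnitSphere (by simpa using hu) fun i => abs_nonneg (u i)

end L2norm

section ShiftedVector

variable {n : ℕ} {ρ t : ℝ} {x v : Fin n → ℝ}

theorem sum_mul_eq_of_shift (hv : ∀ i, v i = x i - t) (w : Fin n → ℝ) :
    ∑ i, v i * w i = ∑ i, x i * w i - t * ∑ i, w i := by
  rw [mul_sum, ← sum_sub_distrib]
  exact sum_congr rfl fun i _ => by rw [hv]; ring

theorem two_mul_sum_sub_eq_of_shift (hv : ∀ i, v i = x i - t) :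
    2 * ∑ i, v i - ρ * t * ∑ i, x i * v i =
      ρ * (∑ i, x i) * t ^ 2 - (ρ * ∑ i, x i ^ 2 + 2 * n) * t + 2 * ∑ i, x i := by
  simp only [hv, mul_sub, sum_sub_distrib, sum_const, card_univ, Fintype.card_fin, nsmul_eq_mul,
    ← sum_mul, sq]
  ring

theorem normalized_shift_relations (hv : ∀ i, v i = x i - t)
    (hroot : 2 * ∑ i, v i = ρ * t * ∑ i, x i * v i) (hv0 : v ≠ 0) :
    2 * ∑ i, ((l2norm v)⁻¹ • v) i = ρ * t * ∑ i, x i * ((l2norm v)⁻¹ • v) i ∧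
      ∑ i, x i * ((l2norm v)⁻¹ • v) i = t * ∑ i, ((l2norm v)⁻¹ • v) i + l2norm v := by
  have hN := (l2norm_pos hv0).ne'
  have hvv : ∑ i, v i * v i = l2norm v ^ 2 := by rw [sq_l2norm]; simp only [sq]
  simp only [Pi.smul_apply, smul_eq_mul, mul_left_comm (x _), ← mul_sum]
  constructor
  · linear_combination (l2norm v)⁻¹ * hroot
  · rw [sum_mul_eq_of_shift hv v] at hvv
    field_simp
    linear_combination hvv

theorem quadA_sub_quadA_normalized (hv : ∀ i, v i = x i - t)
    (hroot : 2 * ∑ i, v i = ρ * t * ∑ i, x i * v i) (hv0 : v ≠ 0) (w : Fin n → ℝ) :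
    quadA ρ x w - quadA ρ x ((l2norm v)⁻¹ • v) =
      ρ * ((t * ∑ i, w i + l2norm v) ^ 2 - (∑ i, x i * w i) ^ 2) +
        (2 - ρ * t ^ 2) * (∑ i, w i - ∑ i, ((l2norm v)⁻¹ • v) i) ^ 2 := by
  obtain ⟨hA, hB⟩ := normalized_shift_relations hv hroot hv0
  generalize (l2norm v)⁻¹ • v = ws at hA hB ⊢
  rw [quadA, quadA, eq_sub_of_add_eq' hB.symm]
  linear_combination (2 * ∑ i, w i - 2 * ∑ i, ws i) * hA

theorem quadA_normalized_neg (hρ : 0 < ρ) (hc : ρ * t ^ 2 < 2) (hv : ∀ i, v i = x i - t)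
    (hroot : 2 * ∑ i, v i = ρ * t * ∑ i, x i * v i) (hv0 : v ≠ 0) :
    quadA ρ x ((l2norm v)⁻¹ • v) < 0 := by
  obtain ⟨hA, hB⟩ := normalized_shift_relations hv hroot hv0
  set s := ∑ i, ((l2norm v)⁻¹ • v) i
  set p := ∑ i, x i * ((l2norm v)⁻¹ • v) i
  have hp : p ≠ 0 := by
    rintro hp
    rw [hp, mul_zero] at hA
    rw [hp, show s = 0 by linarith] at hB
    linarith [l2norm_pos hv0]
  have hdouble : 2 * quadA ρ x ((l2norm v)⁻¹ • v) = ρ * p ^ 2 * (ρ * t ^ 2 - 2) := by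
    rw [quadA]; linear_combination (2 * s + ρ * t * p) * hA
  have hneg : ρ * p ^ 2 * (ρ * t ^ 2 - 2) < 0 :=
    mul_neg_of_pos_of_neg (by positivity) (by linarith)
  linarith

theorem quadA_normalized_le (hρ : 0 ≤ ρ) (hc : ρ * t ^ 2 ≤ 2) (hv : ∀ i, v i = x i - t)
    (hroot : 2 * ∑ i, v i = ρ * t * ∑ i, x i * v i) (hv0 : v ≠ 0) {w : Fin n → ℝ}
    (hw1 : ∑ i, w i ^ 2 = 1) (hxw : 0 ≤ ∑ i, x i * w i) :
    quadA ρ x ((l2norm v)⁻¹ • v) ≤ quadA ρ x w := by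
  have hCS := sum_mul_le_l2norm_mul_l2norm v w
  have hw : l2norm w = 1 := by rw [l2norm, hw1, Real.sqrt_one]
  rw [sum_mul_eq_of_shift hv, hw, mul_one] at hCS
  have hsq : (∑ i, x i * w i) ^ 2 ≤ (t * ∑ i, w i + l2norm v) ^ 2 :=
    pow_le_pow_left₀ hxw (by linarith) 2
  linarith [quadA_sub_quadA_normalized hv hroot hv0 w, mul_nonneg hρ (sub_nonneg.2 hsq),
    mul_nonneg (sub_nonneg.2 hc) (sq_nonneg (∑ i, w i - ∑ i, ((l2norm v)⁻¹ • v) i))]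

theorem eq_normalized_of_quadA_eq (hρ : 0 < ρ) (hc : ρ * t ^ 2 ≤ 2) (hv : ∀ i, v i = x i - t)
    (hroot : 2 * ∑ i, v i = ρ * t * ∑ i, x i * v i) (hv0 : v ≠ 0) {w : Fin n → ℝ}
    (hw1 : ∑ i, w i ^ 2 = 1) (hxw : 0 ≤ ∑ i, x i * w i)
    (heq : quadA ρ x w = quadA ρ x ((l2norm v)⁻¹ • v)) :
    w = (l2norm v)⁻¹ • v := by
  have hw : l2norm w = 1 := by rw [l2norm, hw1, Real.sqrt_one]
  have hCS := sum_mul_le_l2norm_mul_l2norm v w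
  rw [sum_mul_eq_of_shift hv, hw, mul_one] at hCS
  have hsq : (∑ i, x i * w i) ^ 2 ≤ (t * ∑ i, w i + l2norm v) ^ 2 :=
    pow_le_pow_left₀ hxw (by linarith) 2
  have hgap := quadA_sub_quadA_normalized hv hroot hv0 w
  have hsq_eq : (∑ i, x i * w i) ^ 2 = (t * ∑ i, w i + l2norm v) ^ 2 := by
    nlinarith [mul_nonneg (sub_nonneg.2 hc) (sq_nonneg (∑ i, w i - ∑ i, ((l2norm v)⁻¹ • v) i))]
  have hvw : ∑ i, v i * w i = l2norm v * l2norm w := by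
    rw [sum_mul_eq_of_shift hv, hw, mul_one]
    nlinarith
  have hparallel := smul_eq_smul_of_sum_mul_eq hvw
  rw [hw, one_smul] at hparallel
  exact (eq_inv_smul_iff₀ (l2norm_pos hv0).ne').2 hparallel.symm

end ShiftedVector

section Prox

variable {n : ℕ}

noncomputable def proxObjective (ρ : ℝ) (x u : Fin n → ℝ) : ℝ :=
  ρ / 2 * ∑ i, (u i - x i) ^ 2 + h2 u

theorem proxObjective_zero (ρ : ℝ) (x : Fin n → ℝ) :
    proxObjective ρ x 0 = ρ / 2 * ∑ i, x i ^ 2 := by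
  simp [proxObjective, h2]

theorem proxObjective_eq (ρ : ℝ) (x : Fin n → ℝ) {u : Fin n → ℝ} (hu : u ≠ 0) :
    proxObjective ρ x u =
      ρ / 2 * ∑ i, x i ^ 2 + quadA ρ x ((l2norm u)⁻¹ • |u|) / 2
        + ρ / 2 * (l2norm u - ∑ i, x i * ((l2norm u)⁻¹ • |u|) i) ^ 2
        + ρ * ∑ i, x i * (|u i| - u i) := by
  have hr := (l2norm_pos hu).ne'
  have hsub : ∑ i, (u i - x i) ^ 2 = l2norm u ^ 2 - 2 * ∑ i, x i * u i + ∑ i, x i ^ 2 := by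
    rw [sq_l2norm, mul_sum, ← sum_sub_distrib, ← sum_add_distrib]
    exact sum_congr rfl fun i _ => by ring
  rw [proxObjective, hsub, h2, if_neg hu, l1norm, quadA]
  simp only [Pi.smul_apply, Pi.abs_apply, smul_eq_mul, mul_left_comm (x _), ← mul_sum, mul_sub,
    sum_sub_distrib]
  field_simp
  ring

variable {ρ : ℝ} {x ws : Fin n → ℝ}

theorem le_proxObjective (hρ : 0 ≤ ρ) (hx : ∀ i, 0 ≤ x i)
    (hmin : ∀ w ∈ nonnegUnitSphere (Fin n), quadA ρ x ws ≤ quadA ρ x w)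
    (hneg : quadA ρ x ws ≤ 0) (u : Fin n → ℝ) :
    ρ / 2 * ∑ i, x i ^ 2 + quadA ρ x ws / 2 ≤ proxObjective ρ x u := by
  rcases eq_or_ne u 0 with rfl | hu
  · rw [proxObjective_zero]
    linarith
  rw [proxObjective_eq ρ x hu]
  have hw := hmin _ (inv_l2norm_smul_abs_mem_nonnegUnitSphere hu)
  have habs : 0 ≤ ∑ i, x i * (|u i| - u i) :=
    sum_nonneg fun i _ => mul_nonneg (hx i) (sub_nonneg.2 (le_abs_self _))
  have hsign := mul_nonneg hρ habs
  have hdev : 0 ≤ ρ / 2 * (l2norm u - ∑ i, x i * ((l2norm u)⁻¹ • |u|) i) ^ 2 := by positivity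
  linarith

theorem proxObjective_smul_eq (hws : ws ∈ nonnegUnitSphere (Fin n))
    (hp : ∑ i, x i * ws i ≠ 0) :
    proxObjective ρ x ((∑ i, x i * ws i) • ws) = ρ / 2 * ∑ i, x i ^ 2 + quadA ρ x ws / 2 := by
  obtain ⟨hw1, hw0⟩ := hws
  have hws0 : ws ≠ 0 := by rintro rfl; simp at hw1
  have hl2 : l2norm ws = 1 := by rw [l2norm, hw1, Real.sqrt_one]
  set p := ∑ i, x i * ws i
  have hsub : ∑ i, (p * ws i - x i) ^ 2 =
      p ^ 2 * ∑ i, ws i ^ 2 - 2 * p * ∑ i, x i * ws i + ∑ i, x i ^ 2 := by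
    rw [mul_sum, mul_sum, ← sum_sub_distrib, ← sum_add_distrib]
    exact sum_congr rfl fun i _ => by ring
  rw [proxObjective, h2, if_neg (smul_ne_zero hp hws0), l1norm, l2norm_smul, hl2, quadA]
  simp only [Pi.smul_apply, smul_eq_mul, abs_mul, abs_of_nonneg (hw0 _), ← mul_sum, hsub, hw1]
  have : |p| ≠ 0 := abs_ne_zero.2 hp
  field_simp
  ring

theorem eq_smul_of_proxObjective_le (hρ : 0 < ρ) (hx : ∀ i, 0 < x i)
    (hmin : ∀ w ∈ nonnegUnitSphere (Fin n), quadA ρ x ws ≤ quadA ρ x w)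
    (huniq : ∀ w ∈ nonnegUnitSphere (Fin n), quadA ρ x w = quadA ρ x ws → w = ws)
    (hneg : quadA ρ x ws < 0) {u : Fin n → ℝ}
    (hu : proxObjective ρ x u ≤ ρ / 2 * ∑ i, x i ^ 2 + quadA ρ x ws / 2) :
    u = (∑ i, x i * ws i) • ws := by
  have hu0 : u ≠ 0 := by
    rintro rfl
    rw [proxObjective_zero] at hu
    linarith
  have hr := (l2norm_pos hu0).ne'
  set w := (l2norm u)⁻¹ • |u| with hw_def
  have hw : w ∈ nonnegUnitSphere (Fin n) := inv_l2norm_smul_abs_mem_nonnegUnitSphere hu0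
  rw [proxObjective_eq ρ x hu0] at hu
  have hQ := hmin w hw
  have hdev : 0 ≤ ρ / 2 * (l2norm u - ∑ i, x i * w i) ^ 2 := by positivity
  have habs : ∀ i ∈ univ, 0 ≤ x i * (|u i| - u i) :=
    fun i _ => mul_nonneg (hx i).le (sub_nonneg.2 (le_abs_self _))
  have hsign := mul_nonneg hρ.le (sum_nonneg habs)
  have hw_eq : w = ws := huniq w hw (by linarith)
  have hr_eq : l2norm u = ∑ i, x i * w i := by
    have : (l2norm u - ∑ i, x i * w i) ^ 2 = 0 := by nlinarith
    linarith [pow_eq_zero_iff two_ne_zero |>.1 this]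
  have hu_abs : |u| = u := by
    have hsum : ∑ i, x i * (|u i| - u i) = 0 := by nlinarith
    funext i
    have := (sum_eq_zero_iff_of_nonneg habs).1 hsum i (mem_univ i)
    rw [Pi.abs_apply]
    linarith [(mul_eq_zero.1 this).resolve_left (hx i).ne']
  rw [← hw_eq, ← hr_eq, hw_def, hu_abs, smul_inv_smul₀ hr]

theorem proxSet_h2_eq_singleton (hρ : 0 < ρ) (hx : ∀ i, 0 < x i)
    (hws : ws ∈ nonnegUnitSphere (Fin n))
    (hmin : ∀ w ∈ nonnegUnitSphere (Fin n), quadA ρ x ws ≤ quadA ρ x w)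
    (huniq : ∀ w ∈ nonnegUnitSphere (Fin n), quadA ρ x w = quadA ρ x ws → w = ws)
    (hneg : quadA ρ x ws < 0) :
    proxSet ρ h2 x = {(∑ i, x i * ws i) • ws} := by
  have hp : ∑ i, x i * ws i ≠ 0 := by
    intro hp
    rw [quadA, hp] at hneg
    nlinarith
  have hstar := proxObjective_smul_eq (ρ := ρ) hws hp
  ext u
  refine ⟨fun hu => eq_smul_of_proxObjective_le hρ hx hmin huniq hneg ?_, ?_⟩
  · exact hstar ▸ (hu _ : proxObjective ρ x u ≤ proxObjective ρ x _)
  · rintro rfl v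
    exact (hstar ▸ le_proxObjective hρ.le (fun i => (hx i).le) hmin hneg.le v :)

end Prox

theorem stmt_8 {n : ℕ} (hn : 0 < n) (ρ : ℝ) (hρ : 0 < ρ)
    (x : Fin n → ℝ) (hdesc : ∀ i j : Fin n, i ≤ j → x j ≤ x i)
    (hnonneg : ∀ i, 0 ≤ x i) (hnotmult : ∀ c : ℝ, x ≠ fun _ => c)
    (Δ αlo : ℝ)
    (hΔ : Δ = ((ρ / 2) * (∑ i, (x i) ^ 2) + n) ^ 2 - 2 * ρ * (∑ i, |x i|) ^ 2)
    (hαlo : αlo = ((ρ / 2) * (∑ i, (x i) ^ 2) + n) - Real.sqrt Δ)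
    (wlo : Fin n → ℝ) (hwlo : ∀ i, wlo i = x i - αlo / (ρ * ∑ j, |x j|))
    (hlast : αlo / (ρ * ∑ j, |x j|) < x ⟨n - 1, Nat.sub_lt hn Nat.one_pos⟩)
    (ws : Fin n → ℝ) (hws : ws = (l2norm wlo)⁻¹ • wlo) :
    ((∑ i, (ws i) ^ 2 = 1) ∧ (∀ i, 0 ≤ ws i) ∧
      (∀ w : Fin n → ℝ, (∑ i, (w i) ^ 2 = 1) → (∀ i, 0 ≤ w i) →
        (1 / 2) * ∑ i, ∑ j, (2 - ρ * x i * x j) * ws i * ws j ≤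
          (1 / 2) * ∑ i, ∑ j, (2 - ρ * x i * x j) * w i * w j)) ∧
    proxSet ρ h2 x = {(∑ i, x i * ws i) • ws} := by
  have habs : ∑ j, |x j| = ∑ j, x j := sum_congr rfl fun j _ => abs_of_nonneg (hnonneg j)
  rw [habs] at hΔ hwlo hlast
  subst hΔ hws
  obtain ⟨i, hi⟩ := Function.ne_iff.1 (hnotmult 0)
  obtain ⟨j, hj⟩ := Function.ne_iff.1 (hnotmult (x ⟨0, hn⟩))
  have hS : 0 < ∑ j, x j :=
    sum_pos' (fun j _ => hnonneg j) ⟨i, mem_univ _, (hnonneg i).lt_of_ne' hi⟩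
  have hCS : (∑ j, x j) ^ 2 < n * ∑ j, x j ^ 2 := by
    simpa using sq_sum_lt_card_mul_sum_sq hj
  obtain ⟨ht, hc, hpoly⟩ := shift_spec_of_lowerRoot hρ hS (by exact_mod_cast hn) hCS hαlo
  set t := αlo / (ρ * ∑ j, x j)
  have hv : ∀ i, 0 < wlo i := fun i => by
    rw [hwlo]
    exact sub_pos.2 (hlast.trans_le (hdesc i _ (Nat.le_sub_one_of_lt i.isLt)))
  have hv0 : wlo ≠ 0 := fun h => (hv ⟨0, hn⟩).ne' (congrFun h _)
  have hroot : 2 * ∑ i, wlo i = ρ * t * ∑ i, x i * wlo i := by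
    linarith [two_mul_sum_sub_eq_of_shift (ρ := ρ) hwlo]
  have hxw : ∀ w ∈ nonnegUnitSphere (Fin n), 0 ≤ ∑ i, x i * w i :=
    fun w hw => sum_nonneg fun i _ => mul_nonneg (hnonneg i) (hw.2 i)
  have hws := inv_l2norm_smul_mem_nonnegUnitSphere hv0 fun i => (hv i).le
  have hmin : ∀ w ∈ nonnegUnitSphere (Fin n), quadA ρ x ((l2norm wlo)⁻¹ • wlo) ≤ quadA ρ x w :=
    fun w hw => quadA_normalized_le hρ.le hc.le hwlo hroot hv0 hw.1 (hxw w hw)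
  refine ⟨⟨hws.1, hws.2, fun w hw1 hw0 => ?_⟩, ?_⟩
  · simp only [sum_sum_mul_mul_eq_quadA]
    linarith [hmin w ⟨hw1, hw0⟩]
  · exact proxSet_h2_eq_singleton hρ (fun i => by linarith [hv i, hwlo i]) hws hmin
      (fun w hw => eq_normalized_of_quadA_eq hρ hc.le hwlo hroot hv0 hw.1 (hxw w hw))
      (quadA_normalized_neg hρ hc hwlo hroot hv0)
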